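/- Let p > 2 be a real number and let t ∈ (0, 1/(p−1)] be such that (1 − t(p−1))/(p−2) < 2. Then for every s ≥ 0, ((1 − t(p−1))²/(4t(p−2)²))·((1+s)^t − 1) ≤ ψ_p(s), where ψ_p(s) = ∫₀^s ψ'(u)^{(p−2)/(p−1)} du. -/

import Mathlib

/-- The derivative ψ'(s) = 1/((1+ln(1+|s|))²(1+|s|)). -/
noncomputable def psi' (s : ℝ) : ℝ :=
  1 / ((1 + Real.log (1 + |s|)) ^ 2 * (1 + |s|))

/-- ψ_p(s) = ∫₀^s ψ'(t)^((p−2)/(p−1)) dt. -/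
noncomputable def psip (p s : ℝ) : ℝ :=
  ∫ t in (0:ℝ)..s, (psi' t) ^ ((p - 2) / (p - 1))

/-!
Put `α = (p-2)/(p-1)` and `r = (1 - t(p-1))/(2(p-2))`, so that `0 ≤ r ≤ 1`, `0 ≤ α ≤ 1`,
the constant times `t` is `r²`, and `1 - t = α(1 + 2r)`. Then the left side is
`∫₀ˢ r² (1+u)^(t-1) du`, and it suffices to compare integrands. With `x = 1 + u`, the
pointwise bound `r² (1+u)^(t-1) ≤ ψ'(u)^α` is equivalent to `r² (1 + log x)^(2α) ≤ x^(2αr)`,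
which follows from `r (1 + log x) ≤ x^r` (that is, `log y ≤ y - 1` at `y = x^r`) and `r² ≤ r^(2α)`.
-/

open Real

namespace Real

lemma mul_one_add_log_le_rpow {r x : ℝ} (hr1 : r ≤ 1) (hx : 0 < x) :
    r * (1 + log x) ≤ x ^ r := by
  have h := log_le_sub_one_of_pos (rpow_pos_of_pos hx r)
  rw [log_rpow hx] at h
  linarith

lemma sq_mul_one_add_log_rpow_le {r α x : ℝ} (hr0 : 0 ≤ r) (hr1 : r ≤ 1) (hα0 : 0 ≤ α)
    (hα1 : α ≤ 1) (hx : 1 ≤ x) :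
    r ^ 2 * (1 + log x) ^ (2 * α) ≤ x ^ (2 * α * r) := by
  have hx0 : 0 < x := by linarith
  have hz : 0 ≤ 1 + log x := by linarith [log_nonneg hx]
  calc r ^ 2 * (1 + log x) ^ (2 * α)
      ≤ r ^ (2 * α) * (1 + log x) ^ (2 * α) := by
        gcongr
        rw [← rpow_two]
        exact rpow_le_rpow_of_exponent_ge' hr0 hr1 (by positivity) (by linarith)
    _ = (r * (1 + log x)) ^ (2 * α) := (mul_rpow hr0 hz).symm
    _ ≤ (x ^ r) ^ (2 * α) :=
        rpow_le_rpow (mul_nonneg hr0 hz) (mul_one_add_log_le_rpow hr1 hx0) (by positivity)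
    _ = x ^ (2 * α * r) := by rw [← rpow_mul hx0.le, mul_comm r]

end Real

lemma psi'_pos (u : ℝ) : 0 < psi' u := by
  unfold psi'
  have : 0 ≤ log (1 + |u|) := log_nonneg (by linarith [abs_nonneg u])
  positivity

lemma continuous_psi' : Continuous psi' := by
  unfold psi'
  have hlog : Continuous fun u : ℝ => log (1 + |u|) :=
    (by fun_prop : Continuous fun u : ℝ => 1 + |u|).log fun u => by positivity
  exact continuous_const.div (by fun_prop) fun u => (one_div_pos.mp (psi'_pos u)).ne'

lemma psi'_of_nonneg {u : ℝ} (hu : 0 ≤ u) :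
    psi' u = ((1 + log (1 + u)) ^ 2 * (1 + u))⁻¹ := by
  rw [psi', abs_of_nonneg hu, one_div]

lemma sq_mul_rpow_le_psi'_rpow {r α u : ℝ} (hr0 : 0 ≤ r) (hr1 : r ≤ 1) (hα0 : 0 ≤ α)
    (hα1 : α ≤ 1) (hu : 0 ≤ u) :
    r ^ 2 * (1 + u) ^ (-(α + 2 * α * r)) ≤ psi' u ^ α := by
  have hx : 1 ≤ 1 + u := by linarith
  have hx0 : 0 < 1 + u := by linarith
  have hz : 0 < 1 + log (1 + u) := by linarith [log_nonneg hx]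
  rw [psi'_of_nonneg hu, inv_rpow (by positivity), mul_rpow (by positivity) hx0.le,
    ← rpow_natCast_mul hz.le, Nat.cast_ofNat, rpow_neg hx0.le, rpow_add hx0, ← div_eq_mul_inv,
    div_le_iff₀ (by positivity), inv_mul_eq_div, le_div_iff₀ (by positivity)]
  calc r ^ 2 * ((1 + log (1 + u)) ^ (2 * α) * (1 + u) ^ α)
      = r ^ 2 * (1 + log (1 + u)) ^ (2 * α) * (1 + u) ^ α := by ring
    _ ≤ (1 + u) ^ (2 * α * r) * (1 + u) ^ α := by
        gcongr
        exact sq_mul_one_add_log_rpow_le hr0 hr1 hα0 hα1 hx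
    _ = (1 + u) ^ α * (1 + u) ^ (2 * α * r) := mul_comm _ _

lemma integral_one_add_rpow_sub_one {t : ℝ} (ht : 0 < t) (s : ℝ) :
    ∫ u in (0 : ℝ)..s, (1 + u) ^ (t - 1) = ((1 + s) ^ t - 1) / t := by
  rw [intervalIntegral.integral_comp_add_left (fun x => x ^ (t - 1)) 1,
    integral_rpow (Or.inl (by linarith)), sub_add_cancel]
  norm_num

theorem stmt_3 (p t : ℝ) (hp : 2 < p) (ht : t ∈ Set.Ioc (0 : ℝ) (1 / (p - 1)))
    (ht2 : (1 - t * (p - 1)) / (p - 2) < 2) (s : ℝ) (hs : 0 ≤ s) :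
    (1 - t * (p - 1)) ^ 2 / (4 * t * (p - 2) ^ 2) * ((1 + s) ^ t - 1) ≤ psip p s := by
  obtain ⟨ht0, ht1⟩ := ht
  have hp1 : 0 < p - 1 := by linarith
  have hp2 : 0 < p - 2 := by linarith
  set α := (p - 2) / (p - 1) with hα
  set r := (1 - t * (p - 1)) / (2 * (p - 2)) with hr
  have hα0 : 0 ≤ α := by positivity
  have hα1 : α ≤ 1 := (div_le_one hp1).2 (by linarith)
  have hr0 : 0 ≤ r := div_nonneg (by linarith [(le_div_iff₀ hp1).1 ht1]) (by positivity)
  have hr1 : r ≤ 1 := by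
    rw [div_lt_iff₀ hp2] at ht2
    exact (div_le_one (by positivity)).2 (by linarith)
  have hexp : t - 1 = -(α + 2 * α * r) := by rw [hα, hr]; field_simp; ring
  have hconst : (1 - t * (p - 1)) ^ 2 / (4 * t * (p - 2) ^ 2) * ((1 + s) ^ t - 1)
      = ∫ u in (0 : ℝ)..s, r ^ 2 * (1 + u) ^ (t - 1) := by
    rw [intervalIntegral.integral_const_mul, integral_one_add_rpow_sub_one ht0, hr]
    field_simp
    ring
  rw [hconst, hexp]
  refine intervalIntegral.integral_mono_on hs ?_ ?_ fun u hu =>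
    sq_mul_rpow_le_psi'_rpow hr0 hr1 hα0 hα1 hu.1
  · refine (ContinuousOn.rpow_const (by fun_prop) fun u hu => Or.inl ?_).intervalIntegrable
      |>.const_mul _
    rw [Set.uIcc_of_le hs] at hu
    linarith [hu.1]
  · exact (continuous_psi'.rpow_const fun u => Or.inl (psi'_pos u).ne').intervalIntegrable _ _
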